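/- Soundness of independent partitioning: if a finite ws-set S is partitioned as S = S1 ∪ … ∪ Sk such that the descriptors of S_i and S_j use disjoint sets of variables for i ≠ j, then the events ω(S_1), …, ω(S_k) are mutually independent under the product measure, and hence P(ω(S)) = 1 − ∏_{i=1}^k (1 − P(ω(S_i))). -/
import Mathlib


def omegaD {V α : Type} (d : V → Option α) : Set (V → α) :=
  {f | ∀ x a, d x = some a → f x = a}

def omegaS {V α : Type} (S : Finset (V → Option α)) : Set (V → α) :=
  ⋃ d ∈ S, omegaD d

open Classical in
noncomputable def Pr {V α : Type} [Fintype V] [DecidableEq V] [Fintype α]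
    (p : V → α → ℝ) (S : Set (V → α)) : ℝ :=
  ∑ f ∈ Finset.univ.filter (fun f => f ∈ S), ∏ x, p x (f x)

section Aux

open Classical

variable {V α : Type} [Fintype V] [DecidableEq V] [Fintype α]

lemma Pr_eq (p : V → α → ℝ) (S : Set (V → α)) :
    Pr p S = ∑ f : V → α, if f ∈ S then ∏ x, p x (f x) else 0 := by
  classical
  rw [Pr, Finset.sum_filter]

lemma sum_w {σ : Type} [Fintype σ] [DecidableEq σ] (q : σ → α → ℝ) (hq : ∀ x, ∑ a, q x a = 1) :
    ∑ h : σ → α, ∏ x, q x (h x) = 1 := by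
  classical
  rw [← Fintype.prod_sum q]
  simp [hq]

lemma Pr_univ (p : V → α → ℝ) (hp1 : ∀ x, ∑ a, p x a = 1) :
    Pr p (Set.univ : Set (V → α)) = 1 := by
  rw [Pr_eq]
  simpa using sum_w p hp1

lemma Pr_compl (p : V → α → ℝ) (hp1 : ∀ x, ∑ a, p x a = 1) (S : Set (V → α)) :
    Pr p Sᶜ = 1 - Pr p S := by
  have h : Pr p S + Pr p Sᶜ = 1 := by
    rw [Pr_eq, Pr_eq, ← Finset.sum_add_distrib, ← sum_w p hp1]
    refine Finset.sum_congr rfl fun f _ => ?_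
    by_cases hf : f ∈ S <;> simp [hf]
  linarith

lemma pr_mul (p : V → α → ℝ) (hp1 : ∀ x, ∑ a, p x a = 1)
    (U : Set V) (B C : Set (V → α))
    (hB : ∀ f g : V → α, (∀ x ∈ U, f x = g x) → f ∈ B → g ∈ B)
    (hC : ∀ f g : V → α, (∀ x ∉ U, f x = g x) → f ∈ C → g ∈ C) :
    Pr p (B ∩ C) = Pr p B * Pr p C := by
  classical
  have hα : IsEmpty V ∨ Nonempty α := by
    by_cases h : Nonempty V
    · obtain ⟨x⟩ := h
      right
      by_contra hα
      rw [not_nonempty_iff] at hα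
      have := hp1 x
      simp at this
    · exact Or.inl (not_nonempty_iff.mp h)
  set e := (Equiv.piEquivPiSubtypeProd (fun x => x ∈ U) fun _ : V => α) with he
  obtain ⟨h0⟩ : Nonempty (∀ _x : {x : V // ¬ x ∈ U}, α) := by
    rcases hα with h | h
    · exact ⟨fun x => (h.false x.1).elim⟩
    · exact ⟨fun _ => h.some⟩
  obtain ⟨g0⟩ : Nonempty (∀ _x : {x : V // x ∈ U}, α) := by
    rcases hα with h | h
    · exact ⟨fun x => (h.false x.1).elim⟩
    · exact ⟨fun _ => h.some⟩
  set wB : (∀ _x : {x : V // x ∈ U}, α) → ℝ := fun g => ∏ x : {x : V // x ∈ U}, p x.1 (g x) with hwB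
  set wC : (∀ _x : {x : V // ¬ x ∈ U}, α) → ℝ := fun h => ∏ x : {x : V // ¬ x ∈ U}, p x.1 (h x) with hwC
  have hsymm1 : ∀ g h (x : V) (hx : x ∈ U), e.symm (g, h) x = g ⟨x, hx⟩ := by
    intro g h x hx
    simp [he, Equiv.piEquivPiSubtypeProd_symm_apply, hx]
  have hsymm2 : ∀ g h (x : V) (hx : ¬ x ∈ U), e.symm (g, h) x = h ⟨x, hx⟩ := by
    intro g h x hx
    simp [he, Equiv.piEquivPiSubtypeProd_symm_apply, hx]
  have hw : ∀ g h, ∏ x, p x (e.symm (g, h) x) = wB g * wC h := by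
    intro g h
    rw [← Fintype.prod_subtype_mul_prod_subtype (fun x => x ∈ U)
      (fun x => p x (e.symm (g, h) x))]
    congr 1
    · exact Finset.prod_congr rfl fun x _ => by rw [hsymm1 g h x.1 x.2]
    · exact Finset.prod_congr rfl fun x _ => by rw [hsymm2 g h x.1 x.2]
  have hBg : ∀ g h h', e.symm (g, h) ∈ B ↔ e.symm (g, h') ∈ B := by
    intro g h h'
    constructor <;> intro hf <;> refine hB _ _ (fun x hx => ?_) hf <;>
      rw [hsymm1 g h x hx, hsymm1 g h' x hx]
  have hCh : ∀ g g' h, e.symm (g, h) ∈ C ↔ e.symm (g', h) ∈ C := by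
    intro g g' h
    constructor <;> intro hf <;> refine hC _ _ (fun x hx => ?_) hf <;>
      rw [hsymm2 g h x hx, hsymm2 g' h x hx]
  have key : ∀ (D : Set (V → α)),
      Pr p D = ∑ g, ∑ h, (if e.symm (g, h) ∈ D then wB g * wC h else 0) := by
    intro D
    rw [Pr_eq, ← Equiv.sum_comp e.symm (fun f => if f ∈ D then ∏ x, p x (f x) else 0),
      Fintype.sum_prod_type]
    exact Finset.sum_congr rfl fun g _ => Finset.sum_congr rfl fun h _ => by rw [hw]
  have hsumC : ∑ h, wC h = 1 := sum_w (fun x : {x : V // ¬ x ∈ U} => p x.1) fun x => hp1 x.1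
  have hsumB : ∑ g, wB g = 1 := sum_w (fun x : {x : V // x ∈ U} => p x.1) fun x => hp1 x.1
  have hPB : Pr p B = ∑ g, (if e.symm (g, h0) ∈ B then wB g else 0) := by
    rw [key B]
    refine Finset.sum_congr rfl fun g _ => ?_
    have : ∀ h, (if e.symm (g, h) ∈ B then wB g * wC h else 0)
        = (if e.symm (g, h0) ∈ B then wB g else 0) * wC h := by
      intro h
      by_cases hb : e.symm (g, h0) ∈ B <;> simp [hBg g h h0, hb]
    rw [Finset.sum_congr rfl fun h _ => this h, ← Finset.mul_sum, hsumC, mul_one]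
  have hPC : Pr p C = ∑ h, (if e.symm (g0, h) ∈ C then wC h else 0) := by
    rw [key C, Finset.sum_comm]
    refine Finset.sum_congr rfl fun h _ => ?_
    have : ∀ g, (if e.symm (g, h) ∈ C then wB g * wC h else 0)
        = wB g * (if e.symm (g0, h) ∈ C then wC h else 0) := by
      intro g
      by_cases hc : e.symm (g0, h) ∈ C <;> simp [hCh g g0 h, hc]
    rw [Finset.sum_congr rfl fun g _ => this g, ← Finset.sum_mul, hsumB, one_mul]
  rw [key (B ∩ C), hPB, hPC, Finset.sum_mul_sum]
  refine Finset.sum_congr rfl fun g _ => Finset.sum_congr rfl fun h _ => ?_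
  by_cases h1 : e.symm (g, h0) ∈ B <;> by_cases h2 : e.symm (g0, h) ∈ C <;>
    simp [Set.mem_inter_iff, hBg g h h0, hCh g g0 h, h1, h2]

lemma pr_iInter (p : V → α → ℝ) (hp1 : ∀ x, ∑ a, p x a = 1)
    {ι : Type} [DecidableEq ι] (W : ι → Set V) (B : ι → Set (V → α))
    (hdet : ∀ i (f g : V → α), (∀ x ∈ W i, f x = g x) → f ∈ B i → g ∈ B i)
    (J : Finset ι) (hW : ∀ i ∈ J, ∀ j ∈ J, i ≠ j → Disjoint (W i) (W j)) :
    Pr p (⋂ i ∈ J, B i) = ∏ i ∈ J, Pr p (B i) := by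
  classical
  induction J using Finset.induction with
  | empty => simpa using Pr_univ p hp1
  | @insert a J ha ih =>
    have hC' : ∀ f g : V → α, (∀ x ∉ W a, f x = g x) →
        f ∈ (⋂ i ∈ J, B i) → g ∈ (⋂ i ∈ J, B i) := by
      intro f g hfg hf
      simp only [Set.mem_iInter] at hf ⊢
      intro i hi
      refine hdet i f g (fun x hx => ?_) (hf i hi)
      refine hfg x ?_
      have hne : i ≠ a := fun h => ha (h ▸ hi)
      have := hW i (Finset.mem_insert_of_mem hi) a (Finset.mem_insert_self a J) hne
      exact Set.disjoint_left.mp this hx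
    rw [Finset.set_biInter_insert, Finset.prod_insert ha,
      pr_mul p hp1 (W a) (B a) (⋂ i ∈ J, B i) (hdet a) hC',
      ih (fun i hi j hj hij =>
        hW i (Finset.mem_insert_of_mem hi) j (Finset.mem_insert_of_mem hj) hij)]

end Aux

/-- Soundness of independent partitioning: ws-sets on disjoint variables yield
mutually independent events, so the probability of the union follows the
complement-product formula. -/
theorem stmt13 {V α : Type} [Fintype V] [DecidableEq V] [Fintype α]
    (p : V → α → ℝ) (hp0 : ∀ x a, 0 ≤ p x a) (hp1 : ∀ x, ∑ a, p x a = 1)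
    {k : ℕ} (S : Fin k → Finset (V → Option α))
    (hdisj : ∀ i j, i ≠ j → ∀ d1 ∈ S i, ∀ d2 ∈ S j, ∀ y, d1 y = none ∨ d2 y = none) :
    (∀ J : Finset (Fin k),
        Pr p (⋂ i ∈ J, omegaS (S i)) = ∏ i ∈ J, Pr p (omegaS (S i))) ∧
    Pr p (⋃ i, omegaS (S i)) = 1 - ∏ i, (1 - Pr p (omegaS (S i))) := by
  classical
  set W : Fin k → Set V := fun i => {y | ∃ d ∈ S i, d y ≠ none} with hWdef
  have hWdisj : ∀ i j, i ≠ j → Disjoint (W i) (W j) := by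
    intro i j hij
    rw [Set.disjoint_left]
    rintro y ⟨d1, hd1, hd1y⟩ ⟨d2, hd2, hd2y⟩
    rcases hdisj i j hij d1 hd1 d2 hd2 y with h | h
    · exact hd1y h
    · exact hd2y h
  have hdet : ∀ i (f g : V → α), (∀ x ∈ W i, f x = g x) →
      f ∈ omegaS (S i) → g ∈ omegaS (S i) := by
    intro i f g hfg hf
    rw [omegaS, Set.mem_iUnion₂] at hf ⊢
    obtain ⟨d, hd, hfd⟩ := hf
    refine ⟨d, hd, fun x a hxa => ?_⟩
    rw [← hfg x ⟨d, hd, by simp [hxa]⟩]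
    exact hfd x a hxa
  have hdetc : ∀ i (f g : V → α), (∀ x ∈ W i, f x = g x) →
      f ∈ (omegaS (S i))ᶜ → g ∈ (omegaS (S i))ᶜ := by
    intro i f g hfg hf hg
    exact hf (hdet i g f (fun x hx => (hfg x hx).symm) hg)
  constructor
  · intro J
    exact pr_iInter p hp1 W _ hdet J fun i _ j _ hij => hWdisj i j hij
  · have hcompl : (⋃ i, omegaS (S i))ᶜ = ⋂ i ∈ (Finset.univ : Finset (Fin k)),
        (omegaS (S i))ᶜ := by
      simp [Set.compl_iUnion]
    have h1 : Pr p (⋃ i, omegaS (S i)) = 1 - Pr p ((⋃ i, omegaS (S i))ᶜ) := by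
      rw [Pr_compl p hp1]; ring
    rw [h1, hcompl, pr_iInter p hp1 W _ hdetc Finset.univ fun i _ j _ hij => hWdisj i j hij]
    simp [Pr_compl p hp1]
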